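/- arXiv:2202.13743 — 4 statements merged into one kernel-verified Lean document; each statement's English description precedes it below -/
import Mathlib

section
/- Let a < b be real numbers and let F = (X, Y) : ℝ × [a,b] → ℝ × [a,b] be a C¹ diffeomorphism onto ℝ × [a,b] such that: (i) F(x+1, y) = F(x, y) + (1, 0) for all (x,y) (F is a lift of a map of the annulus (ℝ/ℤ) × [a,b]); (ii) F preserves each boundary component, i.e. Y(x,a) = a and Y(x,b) = b for all x; (iii) ∂X/∂y(x,y) > 0 for all (x,y) (twist condition); (iv) F is area preserving, i.e. det DF(x,y) = 1 for all (x,y); (v) X(x,a) < x and X(x,b) > x for all x ∈ ℝ. Then F admits a fixed point: there exists (x₀,y₀) ∈ ℝ × [a,b] with F(x₀,y₀) = (x₀,y₀). -/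
/-!
By the twist condition, every vertical segment `{x} × [a, b]` contains exactly one point
`(x, g x)` that `F` moves vertically, and `g` is continuous and `1`-periodic. `F` maps the graph
of `g` onto the graph of `G x = Y x (g x)`; being a continuous bijection of the strip preserving the
boundary lines, it maps the region between the lower boundary and the graph of `g` onto the region
between the lower boundary and the graph of `G`. Both regions are invariant under the deck
translations and `F` commutes with them, so area preservation applied on a fundamental domain
gives `∫₀¹ g = ∫₀¹ G`. Hence `g - G` vanishes at some `x`, and `(x, g x)` is a fixed point.
-/

open Set MeasureTheory Function Pointwise

theorem LinearMap.det_prod_eq {R : Type*} [CommRing R] (f : R × R →ₗ[R] R × R) :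
    LinearMap.det f = (f (1, 0)).1 * (f (0, 1)).2 - (f (0, 1)).1 * (f (1, 0)).2 := by
  rw [← LinearMap.det_toMatrix (Module.Basis.finTwoProd R), Matrix.det_fin_two]
  simp [LinearMap.toMatrix_apply, Module.Basis.finTwoProd_zero, Module.Basis.finTwoProd_one]

section Partials

variable {𝕜 E : Type*} [NontriviallyNormedField 𝕜] [NormedAddCommGroup E] [NormedSpace 𝕜 E]
  {F : 𝕜 × 𝕜 → E} {L : 𝕜 × 𝕜 →L[𝕜] E} {s t : Set 𝕜} {x y : 𝕜}

theorem HasFDerivWithinAt.hasDerivWithinAt_prodMk_left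
    (hF : HasFDerivWithinAt F L (s ×ˢ t) (x, y)) (hy : y ∈ t) :
    HasDerivWithinAt (fun x' => F (x', y)) (L (1, 0)) s x :=
  hF.comp_hasDerivWithinAt x
    (((hasDerivAt_id x).prodMk (hasDerivAt_const x y)).hasDerivWithinAt (s := s))
    fun _ hx' => mk_mem_prod hx' hy

theorem HasFDerivWithinAt.hasDerivWithinAt_prodMk_right
    (hF : HasFDerivWithinAt F L (s ×ˢ t) (x, y)) (hx : x ∈ s) :
    HasDerivWithinAt (fun y' => F (x, y')) (L (0, 1)) t y :=
  hF.comp_hasDerivWithinAt y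
    (((hasDerivAt_const y x).prodMk (hasDerivAt_id y)).hasDerivWithinAt (s := t))
    fun _ hy' => mk_mem_prod hx hy'

end Partials

theorem addHaar_image_eq_of_abs_det_eq_one {E : Type*} [NormedAddCommGroup E] [NormedSpace ℝ E]
    [FiniteDimensional ℝ E] [MeasurableSpace E] [BorelSpace E] (μ : Measure E)
    [μ.IsAddHaarMeasure] {f : E → E} {f' : E → E →L[ℝ] E} {s : Set E} (hs : MeasurableSet s)
    (hf' : ∀ x ∈ s, HasFDerivWithinAt f (f' x) s x) (hdet : ∀ x ∈ s, |(f' x).det| = 1)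
    (hf : InjOn f s) : μ (f '' s) = μ s := by
  rw [← lintegral_abs_det_fderiv_eq_addHaar_image μ hs hf' hf,
    setLIntegral_congr_fun hs fun x hx => by rw [hdet x hx, ENNReal.ofReal_one], setLIntegral_one]

theorem strictMonoOn_of_derivWithin_pos {D : Set ℝ} (hD : Convex ℝ D) {f : ℝ → ℝ}
    (hf : ContinuousOn f D) (hf' : ∀ x ∈ interior D, 0 < derivWithin f D x) :
    StrictMonoOn f D :=
  strictMonoOn_of_deriv_pos hD hf fun x hx => by
    rw [← derivWithin_of_mem_nhds (mem_interior_iff_mem_nhds.1 hx)]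
    exact hf' x hx

theorem exists_continuous_zero_of_strictMonoOn {α : Type*} [TopologicalSpace α] {a b : ℝ}
    (hab : a ≤ b) {φ : α → ℝ → ℝ} (hφx : ∀ y ∈ Icc a b, Continuous (φ · y))
    (hφy : ∀ x, ContinuousOn (φ x) (Icc a b)) (hmono : ∀ x, StrictMonoOn (φ x) (Icc a b))
    (hsign : ∀ x, φ x a < 0 ∧ 0 < φ x b) :
    ∃ g : α → ℝ, Continuous g ∧ ∀ x, g x ∈ Ioo a b ∧ ∀ y ∈ Icc a b, φ x y = 0 ↔ y = g x := by
  have hzero : ∀ x, ∃ y ∈ Icc a b, φ x y = 0 := fun x =>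
    intermediate_value_Icc hab (hφy x) ⟨(hsign x).1.le, (hsign x).2.le⟩
  choose g hg_mem hg_zero using hzero
  have hneg : ∀ x, ∀ y ∈ Icc a b, φ x y < 0 ↔ y < g x := fun x y hy => by
    rw [← hg_zero x]; exact (hmono x).lt_iff_lt hy (hg_mem x)
  have hpos : ∀ x, ∀ y ∈ Icc a b, 0 < φ x y ↔ g x < y := fun x y hy => by
    rw [← hg_zero x]; exact (hmono x).lt_iff_lt (hg_mem x) hy
  have hlo : ∀ x, a < g x := fun x => (hneg x a (left_mem_Icc.2 hab)).1 (hsign x).1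
  have hhi : ∀ x, g x < b := fun x => (hpos x b (right_mem_Icc.2 hab)).1 (hsign x).2
  have hgc : Continuous g := by
    refine continuous_iff_continuousAt.2 fun x₀ =>
      tendsto_order.2 ⟨fun y₁ hy₁ => ?_, fun y₂ hy₂ => ?_⟩
    · -- the sign of `φ · y` at `x₀` persists near `x₀` and places `y` below `g x`
      have hy : max y₁ a ∈ Icc a b := ⟨le_max_right _ _, max_le (hy₁.trans (hhi x₀)).le hab⟩
      filter_upwards [((hφx _ hy).tendsto x₀).eventually
        (gt_mem_nhds ((hneg x₀ _ hy).2 (max_lt hy₁ (hlo x₀))))] with x hx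
      exact (le_max_left _ _).trans_lt ((hneg x _ hy).1 hx)
    · have hy : min y₂ b ∈ Icc a b := ⟨le_min ((hlo x₀).trans hy₂).le hab, min_le_right _ _⟩
      filter_upwards [((hφx _ hy).tendsto x₀).eventually
        (lt_mem_nhds ((hpos x₀ _ hy).2 (lt_min hy₂ (hhi x₀))))] with x hx
      exact ((hpos x _ hy).1 hx).trans_le (min_le_left _ _)
  refine ⟨g, hgc, fun x => ⟨⟨hlo x, hhi x⟩, fun y hy => ⟨fun h => ?_, fun h => h ▸ hg_zero x⟩⟩⟩
  exact (hmono x).injOn hy (hg_mem x) (h.trans (hg_zero x).symm)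

theorem isPreconnected_of_forall_mk_mem {α β : Type*} [TopologicalSpace α] [TopologicalSpace β]
    [PreconnectedSpace α] {s : Set (α × β)} (c : β) (hc : ∀ x, (x, c) ∈ s)
    (hfib : ∀ x, IsPreconnected {y | (x, y) ∈ s}) : IsPreconnected s := by
  rcases s.eq_empty_or_nonempty with rfl | ⟨⟨x₀, -⟩, -⟩
  · exact isPreconnected_empty
  refine isPreconnected_of_forall (x₀, c) fun p hp =>
    ⟨univ ×ˢ {c} ∪ {p.1} ×ˢ {y | (p.1, y) ∈ s}, ?_, Or.inl ⟨trivial, rfl⟩, Or.inr ⟨rfl, hp⟩,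
      (isPreconnected_univ.prod isPreconnected_singleton).union (p.1, c) ⟨trivial, rfl⟩
        ⟨rfl, hc p.1⟩ (isPreconnected_singleton.prod (hfib p.1))⟩
  rintro ⟨x, y⟩ (⟨-, rfl : y = c⟩ | ⟨rfl : x = p.1, hy⟩)
  exacts [hc x, hy]

theorem isPreconnected_setOf_mem_Ico {α : Type*} [TopologicalSpace α] [PreconnectedSpace α]
    {a : ℝ} {g : α → ℝ} (hg : ∀ x, a < g x) : IsPreconnected {p : α × ℝ | p.2 ∈ Ico a (g p.1)} :=
  isPreconnected_of_forall_mk_mem a (fun x => ⟨le_rfl, hg x⟩) fun x =>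
    show IsPreconnected (Ico a (g x)) from isPreconnected_Ico

theorem isPreconnected_setOf_mem_Ioc {α : Type*} [TopologicalSpace α] [PreconnectedSpace α]
    {b : ℝ} {g : α → ℝ} (hg : ∀ x, g x < b) : IsPreconnected {p : α × ℝ | p.2 ∈ Ioc (g p.1) b} :=
  isPreconnected_of_forall_mk_mem b (fun x => ⟨hg x, le_rfl⟩) fun x =>
    show IsPreconnected (Ioc (g x) b) from isPreconnected_Ioc

section StripMap

variable {a b : ℝ} {F : ℝ × ℝ → ℝ × ℝ} {g G : ℝ → ℝ}

theorem image_subset_below_or_above (hFc : ContinuousOn F (univ ×ˢ Icc a b))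
    (hF : InjOn F (univ ×ˢ Icc a b)) (hg : ∀ x, g x ∈ Icc a b) (hG : Continuous G)
    (hgraph : ∀ x, F (x, g x) = (x, G x)) {U : Set (ℝ × ℝ)} (hU : IsPreconnected U)
    (hUS : U ⊆ univ ×ˢ Icc a b) (hUg : ∀ p ∈ U, p.2 ≠ g p.1) :
    F '' U ⊆ {q | q.2 < G q.1} ∨ F '' U ⊆ {q | G q.1 < q.2} := by
  refine (hU.image F (hFc.mono hUS)).subset_or_subset
    (isOpen_lt continuous_snd (hG.comp continuous_fst))
    (isOpen_lt (hG.comp continuous_fst) continuous_snd)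
    (disjoint_left.2 fun q (h₁ : q.2 < G q.1) (h₂ : G q.1 < q.2) => h₁.asymm h₂) ?_
  rintro _ ⟨p, hp, rfl⟩
  refine lt_or_gt_of_ne (a := (F p).2) (b := G (F p).1) fun h => hUg p hp ?_
  have hp_eq : p = ((F p).1, g (F p).1) :=
    hF (hUS hp) ⟨trivial, hg _⟩ (by rw [hgraph]; exact Prod.ext rfl h)
  exact (congrArg Prod.snd hp_eq).trans (congrArg g (congrArg Prod.fst hp_eq).symm)

theorem image_setOf_mem_Ico_eq (hFc : ContinuousOn F (univ ×ˢ Icc a b))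
    (hF : BijOn F (univ ×ˢ Icc a b) (univ ×ˢ Icc a b)) (hbot : ∀ x, (F (x, a)).2 = a)
    (htop : ∀ x, (F (x, b)).2 = b) (hg : ∀ x, g x ∈ Ioo a b) (hG : Continuous G)
    (hgraph : ∀ x, F (x, g x) = (x, G x)) :
    F '' {p | p.2 ∈ Ico a (g p.1)} = {q | q.2 ∈ Ico a (G q.1)} := by
  have hGS : ∀ x, G x ∈ Icc a b := fun x => by
    simpa [hgraph] using (hF.mapsTo (mk_mem_prod (mem_univ x) (Ioo_subset_Icc_self (hg x)))).2
  have hgS : ∀ x, g x ∈ Icc a b := fun x => Ioo_subset_Icc_self (hg x)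
  have hbelow : F '' {p | p.2 ∈ Ico a (g p.1)} ⊆ {q | q.2 < G q.1} := by
    refine (image_subset_below_or_above hFc hF.injOn hgS hG hgraph
      (isPreconnected_setOf_mem_Ico fun x => (hg x).1)
      (fun p hp => ⟨trivial, hp.1, hp.2.le.trans (hg p.1).2.le⟩) fun p hp => hp.2.ne).resolve_right
      fun h => ?_
    have := h ⟨(0, a), ⟨le_rfl, (hg 0).1⟩, rfl⟩
    rw [mem_ofPred_eq, hbot] at this
    exact this.not_ge (hGS _).1
  have habove : F '' {p | p.2 ∈ Ioc (g p.1) b} ⊆ {q | G q.1 < q.2} := by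
    refine (image_subset_below_or_above hFc hF.injOn hgS hG hgraph
      (isPreconnected_setOf_mem_Ioc fun x => (hg x).2)
      (fun p hp => ⟨trivial, (hg p.1).1.le.trans hp.1.le, hp.2⟩) fun p hp => hp.1.ne').resolve_left
      fun h => ?_
    have := h ⟨(0, b), ⟨(hg 0).2, le_rfl⟩, rfl⟩
    rw [mem_ofPred_eq, htop] at this
    exact this.not_ge (hGS _).2
  refine Subset.antisymm (fun q hq => ⟨?_, hbelow hq⟩) fun q hq => ?_
  · obtain ⟨p, hp, rfl⟩ := hq
    exact (hF.mapsTo ⟨trivial, hp.1, hp.2.le.trans (hg p.1).2.le⟩).2.1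
  obtain ⟨p, hp, rfl⟩ := hF.surjOn ⟨trivial, hq.1, hq.2.le.trans (hGS q.1).2⟩
  refine ⟨p, ⟨hp.2.1, lt_of_not_ge fun hgp => ?_⟩, rfl⟩
  rcases hgp.eq_or_lt with h | h
  · have : F p = (p.1, G p.1) := by rw [← hgraph, h]
    rw [this] at hq
    exact hq.2.ne rfl
  · exact (habove ⟨p, ⟨h, hp.2.2⟩, rfl⟩).not_gt hq.2

end StripMap

theorem volume_region_between_co_eq_lintegral {α : Type*} [MeasurableSpace α] {μ : Measure α}
    [SFinite μ] {f g : α → ℝ} (hf : Measurable f) (hg : Measurable g) {s : Set α}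
    (hs : MeasurableSet s) :
    μ.prod volume {p : α × ℝ | p.1 ∈ s ∧ p.2 ∈ Ico (f p.1) (g p.1)}
      = ∫⁻ x in s, ENNReal.ofReal (g x - f x) ∂μ := by
  rw [Measure.prod_apply (measurableSet_region_between_co hf hg hs), ← lintegral_indicator hs]
  congr 1 with x
  by_cases hx : x ∈ s
  · simp only [preimage, mem_ofPred_eq, hx, true_and, ofPred_mem_eq, indicator_of_mem]
    exact Real.volume_Ico
  · simp [hx]

theorem exists_eq_of_integral_eq {α : Type*} [TopologicalSpace α] [PreconnectedSpace α]
    [MeasurableSpace α] {μ : Measure α} [IsFiniteMeasure μ] (hμ : μ ≠ 0) {f g : α → ℝ}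
    (hf : Continuous f) (hg : Continuous g) (hfi : Integrable f μ) (hgi : Integrable g μ)
    (h : ∫ x, f x ∂μ = ∫ x, g x ∂μ) : ∃ x, f x = g x := by
  have hzero : ∫ x, (f - g) x ∂μ = 0 := by
    simp only [Pi.sub_apply]
    rw [integral_sub hfi hgi, h, sub_self]
  obtain ⟨x₁, hx₁⟩ := exists_le_average hμ (hfi.sub hgi)
  obtain ⟨x₂, hx₂⟩ := exists_average_le hμ (hfi.sub hgi)
  rw [average_eq, hzero, smul_zero, Pi.sub_apply, sub_nonpos] at hx₁
  rw [average_eq, hzero, smul_zero, Pi.sub_apply, sub_nonneg] at hx₂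
  exact intermediate_value_univ₂ hf hg hx₁ hx₂

/-- A fundamental domain for the deck translations `(x, y) ↦ (x + n, y)`, `n : ℤ`. -/
def unitStrip : Set (ℝ × ℝ) := Ico 0 1 ×ˢ univ

theorem measurableSet_unitStrip : MeasurableSet unitStrip :=
  measurableSet_Ico.prod MeasurableSet.univ

theorem mem_vadd_unitStrip_iff {n : ℤ} {p : ℝ × ℝ} :
    p ∈ ((n : ℝ), (0 : ℝ)) +ᵥ unitStrip ↔ ⌊p.1⌋ = n := by
  rw [mem_vadd_set_iff_neg_vadd_mem, Int.floor_eq_iff]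
  simp only [unitStrip, vadd_eq_add, Prod.fst_add, Prod.fst_neg, mem_prod, mem_Ico, mem_univ,
    and_true]
  constructor <;> rintro ⟨h₁, h₂⟩ <;> constructor <;> linarith

theorem pairwise_disjoint_vadd_unitStrip :
    Pairwise (Disjoint on fun n : ℤ => ((n : ℝ), (0 : ℝ)) +ᵥ unitStrip) :=
  fun _ _ hmn => disjoint_left.2 fun _ hm hn =>
    hmn ((mem_vadd_unitStrip_iff.1 hm).symm.trans (mem_vadd_unitStrip_iff.1 hn))

theorem iUnion_vadd_unitStrip : ⋃ n : ℤ, ((n : ℝ), (0 : ℝ)) +ᵥ unitStrip = univ :=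
  eq_univ_of_forall fun p => mem_iUnion.2 ⟨⌊p.1⌋, mem_vadd_unitStrip_iff.2 rfl⟩

theorem volume_iUnion_vadd_inter_unitStrip {B : Set (ℝ × ℝ)} (hB : MeasurableSet B)
    (hdisj : Pairwise (Disjoint on fun n : ℤ => ((n : ℝ), (0 : ℝ)) +ᵥ B)) :
    volume ((⋃ n : ℤ, ((n : ℝ), (0 : ℝ)) +ᵥ B) ∩ unitStrip) = volume B := by
  calc volume ((⋃ n : ℤ, ((n : ℝ), (0 : ℝ)) +ᵥ B) ∩ unitStrip)
      = ∑' n : ℤ, volume ((((n : ℝ), (0 : ℝ)) +ᵥ B) ∩ unitStrip) := by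
        rw [iUnion_inter]
        exact measure_iUnion (fun m n hmn => (hdisj hmn).mono inter_subset_left inter_subset_left)
          fun n => (hB.const_vadd _).inter measurableSet_unitStrip
    _ = ∑' n : ℤ, volume (B ∩ ((((-n : ℤ) : ℝ), (0 : ℝ)) +ᵥ unitStrip)) := by
        refine tsum_congr fun n => ?_
        rw [← measure_vadd volume (-((n : ℝ), (0 : ℝ))), vadd_set_inter, neg_vadd_vadd]
        simp
    _ = ∑' n : ℤ, volume (B ∩ (((n : ℝ), (0 : ℝ)) +ᵥ unitStrip)) :=
        (Equiv.neg ℤ).tsum_eq fun n : ℤ => volume (B ∩ (((n : ℝ), (0 : ℝ)) +ᵥ unitStrip))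
    _ = volume B := by
        rw [← measure_iUnion (fun m n hmn => (pairwise_disjoint_vadd_unitStrip hmn).mono
          inter_subset_right inter_subset_right) fun n => hB.inter
          (measurableSet_unitStrip.const_vadd _), ← inter_iUnion, iUnion_vadd_unitStrip, inter_univ]

theorem volume_image_inter_unitStrip {F : ℝ × ℝ → ℝ × ℝ} {s : Set (ℝ × ℝ)} (hs : MeasurableSet s)
    (hs_inv : ∀ n : ℤ, ((n : ℝ), (0 : ℝ)) +ᵥ s = s) (hF_inj : InjOn F s)
    (hF_equiv : ∀ n : ℤ, ∀ p ∈ s, F (((n : ℝ), (0 : ℝ)) +ᵥ p) = ((n : ℝ), (0 : ℝ)) +ᵥ F p)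
    (hF_vol : ∀ t ⊆ s, MeasurableSet t → MeasurableSet (F '' t) ∧ volume (F '' t) = volume t) :
    volume (F '' s ∩ unitStrip) = volume (s ∩ unitStrip) := by
  have hshift : ∀ n : ℤ, ((n : ℝ), (0 : ℝ)) +ᵥ F '' (s ∩ unitStrip)
      = F '' (s ∩ (((n : ℝ), (0 : ℝ)) +ᵥ unitStrip)) := fun n => by
    rw [← hs_inv n, ← vadd_set_inter, hs_inv n, ← image_vadd, ← image_vadd, image_image,
      image_image]
    exact (image_congr fun p hp => hF_equiv n p hp.1).symm
  have hdisj : Pairwise (Disjoint on fun n : ℤ => ((n : ℝ), (0 : ℝ)) +ᵥ F '' (s ∩ unitStrip)) := by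
    intro m n hmn
    rw [onFun, hshift, hshift, disjoint_left]
    rintro _ ⟨p, hp, rfl⟩ ⟨q, hq, hqp⟩
    exact disjoint_left.1 (pairwise_disjoint_vadd_unitStrip hmn) hp.2 (hF_inj hq.1 hp.1 hqp ▸ hq.2)
  have hunion : ⋃ n : ℤ, ((n : ℝ), (0 : ℝ)) +ᵥ F '' (s ∩ unitStrip) = F '' s := by
    simp_rw [hshift, ← image_iUnion, ← inter_iUnion, iUnion_vadd_unitStrip, inter_univ]
  obtain ⟨hBm, hBvol⟩ := hF_vol (s ∩ unitStrip) inter_subset_left (hs.inter measurableSet_unitStrip)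
  rw [← hBvol, ← volume_iUnion_vadd_inter_unitStrip hBm hdisj, hunion]

theorem vadd_setOf_mem_Ico_eq {a : ℝ} {g : ℝ → ℝ} (hg : Periodic g 1) (n : ℤ) :
    ((n : ℝ), (0 : ℝ)) +ᵥ {p : ℝ × ℝ | p.2 ∈ Ico a (g p.1)} = {p | p.2 ∈ Ico a (g p.1)} := by
  ext p
  rw [mem_vadd_set_iff_neg_vadd_mem]
  simp only [vadd_eq_add, mem_ofPred_eq, Prod.fst_add, Prod.snd_add, Prod.fst_neg, Prod.snd_neg,
    neg_zero, zero_add]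
  rw [show -(n : ℝ) + p.1 = p.1 + ((-n : ℤ) : ℝ) * 1 by push_cast; ring, hg.int_mul (-n) p.1]

theorem exists_eq_of_volume_inter_unitStrip_eq {a : ℝ} {g G : ℝ → ℝ} (hg : Continuous g)
    (hG : Continuous G) (hga : ∀ x, a ≤ g x) (hGa : ∀ x, a ≤ G x)
    (h : volume ({q : ℝ × ℝ | q.2 ∈ Ico a (G q.1)} ∩ unitStrip)
      = volume ({p : ℝ × ℝ | p.2 ∈ Ico a (g p.1)} ∩ unitStrip)) :
    ∃ x, G x = g x := by
  set μ := volume.restrict (Ico (0 : ℝ) 1)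
  have hvol : ∀ f : ℝ → ℝ, Continuous f → volume ({p : ℝ × ℝ | p.2 ∈ Ico a (f p.1)} ∩ unitStrip)
      = ∫⁻ x, ENNReal.ofReal (f x - a) ∂μ := fun f hf => by
    rw [Measure.volume_eq_prod, ← volume_region_between_co_eq_lintegral measurable_const
      hf.measurable measurableSet_Ico]
    congr 1 with p
    simp [unitStrip, and_comm]
  have hint : ∀ f : ℝ → ℝ, Continuous f → (∀ x, a ≤ f x) →
      ∫ x, f x - a ∂μ = (∫⁻ x, ENNReal.ofReal (f x - a) ∂μ).toReal := fun f hf hfa =>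
    integral_eq_lintegral_of_nonneg_ae (ae_of_all _ fun x => sub_nonneg.2 (hfa x))
      (hf.sub continuous_const).aestronglyMeasurable
  have hfin : IsFiniteMeasure μ := isFiniteMeasure_restrict.2 measure_Ico_lt_top.ne
  have hμ : μ ≠ 0 := by simp [μ]
  obtain ⟨x, hx⟩ := exists_eq_of_integral_eq hμ (f := fun x => G x - a) (g := fun x => g x - a)
    (hG.sub continuous_const) (hg.sub continuous_const)
    ((hG.sub continuous_const).integrableOn_Icc.mono_set Ico_subset_Icc_self)
    ((hg.sub continuous_const).integrableOn_Icc.mono_set Ico_subset_Icc_self)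
    (by rw [hint G hG hGa, hint g hg hga, ← hvol G hG, ← hvol g hg, h])
  exact ⟨x, sub_left_injective hx⟩

section TwistMap

variable {a b : ℝ} {X Y : ℝ → ℝ → ℝ}

theorem det_eq_of_hasFDerivWithinAt_strip {x y : ℝ} (hab : a < b)
    (hy : y ∈ Icc a b) {L : ℝ × ℝ →L[ℝ] ℝ × ℝ}
    (hL : HasFDerivWithinAt (fun p : ℝ × ℝ => (X p.1 p.2, Y p.1 p.2)) L (univ ×ˢ Icc a b) (x, y)) :
    L.det = deriv (X · y) x * derivWithin (Y x) (Icc a b) y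
      - derivWithin (X x) (Icc a b) y * deriv (Y · y) x := by
  have hx := (hL.hasDerivWithinAt_prodMk_left hy).hasDerivAt Filter.univ_mem
  have hy' := hL.hasDerivWithinAt_prodMk_right (mem_univ x)
  have hu : UniqueDiffWithinAt ℝ (Icc a b) y := uniqueDiffOn_Icc hab y hy
  have hXx : HasDerivAt (X · y) (L (1, 0)).1 x :=
    (ContinuousLinearMap.fst ℝ ℝ ℝ).hasFDerivAt.comp_hasDerivAt x hx
  have hYx : HasDerivAt (Y · y) (L (1, 0)).2 x :=
    (ContinuousLinearMap.snd ℝ ℝ ℝ).hasFDerivAt.comp_hasDerivAt x hx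
  have hXy : HasDerivWithinAt (X x) (L (0, 1)).1 (Icc a b) y :=
    (ContinuousLinearMap.fst ℝ ℝ ℝ).hasFDerivAt.comp_hasDerivWithinAt y hy'
  have hYy : HasDerivWithinAt (Y x) (L (0, 1)).2 (Icc a b) y :=
    (ContinuousLinearMap.snd ℝ ℝ ℝ).hasFDerivAt.comp_hasDerivWithinAt y hy'
  rw [ContinuousLinearMap.det, LinearMap.det_prod_eq, hXx.deriv, hYx.deriv, hXy.derivWithin hu,
    hYy.derivWithin hu]
  rfl

theorem volume_image_of_det_eq_one (hab : a < b)
    (hC1 : ContDiffOn ℝ 1 (fun p : ℝ × ℝ => (X p.1 p.2, Y p.1 p.2)) (univ ×ˢ Icc a b))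
    (hinj : InjOn (fun p : ℝ × ℝ => (X p.1 p.2, Y p.1 p.2)) (univ ×ˢ Icc a b))
    (harea : ∀ x : ℝ, ∀ y ∈ Icc a b, deriv (fun x' => X x' y) x * derivWithin (Y x) (Icc a b) y
        - derivWithin (X x) (Icc a b) y * deriv (fun x' => Y x' y) x = 1)
    {t : Set (ℝ × ℝ)} (ht : t ⊆ univ ×ˢ Icc a b) (htm : MeasurableSet t) :
    MeasurableSet ((fun p : ℝ × ℝ => (X p.1 p.2, Y p.1 p.2)) '' t)
      ∧ volume ((fun p : ℝ × ℝ => (X p.1 p.2, Y p.1 p.2)) '' t) = volume t := by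
  set F : ℝ × ℝ → ℝ × ℝ := fun p => (X p.1 p.2, Y p.1 p.2)
  have hF' : ∀ p ∈ t, HasFDerivWithinAt F (fderivWithin ℝ F (univ ×ˢ Icc a b) p) t p :=
    fun p hp => ((hC1.differentiableOn one_ne_zero p (ht hp)).hasFDerivWithinAt).mono ht
  have hdet : ∀ p ∈ t, |(fderivWithin ℝ F (univ ×ˢ Icc a b) p).det| = 1 := by
    rintro ⟨x, y⟩ hp
    rw [det_eq_of_hasFDerivWithinAt_strip hab (ht hp).2
      (hC1.differentiableOn one_ne_zero _ (ht hp)).hasFDerivWithinAt, harea x y (ht hp).2, abs_one]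
  exact ⟨measurable_image_of_fderivWithin htm hF' (hinj.mono ht),
    addHaar_image_eq_of_abs_det_eq_one volume htm hF' hdet (hinj.mono ht)⟩

theorem exists_continuous_curve_of_twist (hab : a ≤ b)
    (hX : ContinuousOn (uncurry X) (univ ×ˢ Icc a b))
    (htwist : ∀ x, ∀ y ∈ Icc a b, 0 < derivWithin (X x) (Icc a b) y)
    (hmove : ∀ x, X x a < x ∧ x < X x b) :
    ∃ g : ℝ → ℝ, Continuous g ∧ ∀ x, g x ∈ Ioo a b ∧ ∀ y ∈ Icc a b, X x y = x ↔ y = g x := by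
  have hXy : ∀ x, ContinuousOn (X x) (Icc a b) := fun x => hX.uncurry_left x (mem_univ x)
  have hmono : ∀ x, StrictMonoOn (X x) (Icc a b) := fun x =>
    strictMonoOn_of_derivWithin_pos (convex_Icc a b) (hXy x) fun y hy =>
      htwist x y (interior_subset hy)
  simpa only [sub_eq_zero] using exists_continuous_zero_of_strictMonoOn hab
    (φ := fun x y => X x y - x)
    (fun y hy => (continuousOn_univ.1 (hX.uncurry_right y hy)).sub continuous_id)
    (fun x => (hXy x).sub continuousOn_const)
    (fun x _ hy₁ _ hy₂ h => sub_lt_sub_right (hmono x hy₁ hy₂ h) x)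
    (fun x => ⟨sub_neg.2 (hmove x).1, sub_pos.2 (hmove x).2⟩)

theorem periodic_curve_of_lift {g : ℝ → ℝ} (hlift : ∀ x, ∀ y ∈ Icc a b, X (x + 1) y = X x y + 1)
    (hg : ∀ x, g x ∈ Ioo a b ∧ ∀ y ∈ Icc a b, X x y = x ↔ y = g x) : Periodic g 1 := fun x => by
  have hgx : g x ∈ Icc a b := Ioo_subset_Icc_self (hg x).1
  refine (((hg (x + 1)).2 (g x) hgx).1 ?_).symm
  rw [hlift x (g x) hgx, ((hg x).2 (g x) hgx).2 rfl]

theorem map_vadd_of_lift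
    (hlift : ∀ x, ∀ y ∈ Icc a b, X (x + 1) y = X x y + 1 ∧ Y (x + 1) y = Y x y) (n : ℤ)
    {p : ℝ × ℝ} (hp : p.2 ∈ Icc a b) :
    (fun q : ℝ × ℝ => (X q.1 q.2, Y q.1 q.2)) (((n : ℝ), (0 : ℝ)) +ᵥ p)
      = ((n : ℝ), (0 : ℝ)) +ᵥ (X p.1 p.2, Y p.1 p.2) := by
  obtain ⟨x, y⟩ := p
  have hX : Periodic (fun x' => X x' y - x') 1 := fun x' => by
    simp only [(hlift x' y hp).1]; ring
  have hY : Periodic (fun x' => Y x' y) 1 := fun x' => (hlift x' y hp).2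
  have h₁ := hX.int_mul n x
  have h₂ := hY.int_mul n x
  simp only [mul_one] at h₁ h₂
  simp only [vadd_eq_add, Prod.mk_add_mk, zero_add, add_comm (n : ℝ) x, h₂]
  congr 1
  linarith

end TwistMap

/-- **The Poincaré–Birkhoff theorem for twist maps of the annulus**, stated for a lift
`F = (X, Y) : ℝ × [a,b] → ℝ × [a,b]` of a map of the annulus `(ℝ/ℤ) × [a,b]`:
if `F` is a `C¹` diffeomorphism of the strip which commutes with the deck transformation
`(x,y) ↦ (x+1,y)`, preserves each boundary component, satisfies the twist condition
`∂X/∂y > 0`, is area preserving (`det DF = 1`), and moves the two boundary lines in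
opposite directions (`X(x,a) < x` and `X(x,b) > x`), then `F` has a fixed point. -/
theorem poincare_birkhoff_twist (a b : ℝ) (hab : a < b) (X Y : ℝ → ℝ → ℝ)
    -- F is C¹ on the strip ℝ × [a,b]
    (hC1 : ContDiffOn ℝ 1 (fun p : ℝ × ℝ => (X p.1 p.2, Y p.1 p.2))
      (Set.univ ×ˢ Set.Icc a b))
    -- F is a bijection of the strip onto itself (with `hC1` and `harea`, a C¹
    -- diffeomorphism of the strip onto itself)
    (hbij : Set.BijOn (fun p : ℝ × ℝ => (X p.1 p.2, Y p.1 p.2))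
      (Set.univ ×ˢ Set.Icc a b) (Set.univ ×ˢ Set.Icc a b))
    -- (i) F is a lift: F(x+1, y) = F(x, y) + (1, 0)
    (hlift : ∀ x : ℝ, ∀ y ∈ Set.Icc a b, X (x + 1) y = X x y + 1 ∧ Y (x + 1) y = Y x y)
    -- (ii) F preserves each boundary component
    (hbdry : ∀ x : ℝ, Y x a = a ∧ Y x b = b)
    -- (iii) twist condition ∂X/∂y > 0
    (htwist : ∀ x : ℝ, ∀ y ∈ Set.Icc a b, 0 < derivWithin (X x) (Set.Icc a b) y)
    -- (iv) F is area preserving: det DF = 1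
    (harea : ∀ x : ℝ, ∀ y ∈ Set.Icc a b,
      deriv (fun x' => X x' y) x * derivWithin (Y x) (Set.Icc a b) y
        - derivWithin (X x) (Set.Icc a b) y * deriv (fun x' => Y x' y) x = 1)
    -- (v) the boundaries are moved in opposite directions
    (hmove : ∀ x : ℝ, X x a < x ∧ x < X x b) :
    ∃ x₀ y₀ : ℝ, y₀ ∈ Set.Icc a b ∧ X x₀ y₀ = x₀ ∧ Y x₀ y₀ = y₀ := by
  set F : ℝ × ℝ → ℝ × ℝ := fun p => (X p.1 p.2, Y p.1 p.2)
  have hFc : ContinuousOn F (univ ×ˢ Icc a b) := hC1.continuousOn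
  obtain ⟨g, hgc, hg⟩ :=
    exists_continuous_curve_of_twist hab.le (continuous_fst.comp_continuousOn hFc) htwist hmove
  have hgS : ∀ x, g x ∈ Icc a b := fun x => Ioo_subset_Icc_self (hg x).1
  have hgraph : ∀ x, F (x, g x) = (x, Y x (g x)) := fun x =>
    Prod.ext (((hg x).2 _ (hgS x)).2 rfl) rfl
  have hGc : Continuous fun x => Y x (g x) := continuous_snd.comp
    (hFc.comp_continuous (continuous_id.prodMk hgc) fun x => ⟨trivial, hgS x⟩)
  have hUS : {p : ℝ × ℝ | p.2 ∈ Ico a (g p.1)} ⊆ univ ×ˢ Icc a b := fun p hp =>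
    ⟨trivial, hp.1, hp.2.le.trans (hgS p.1).2⟩
  have hvol := volume_image_inter_unitStrip (F := F) (s := {p : ℝ × ℝ | p.2 ∈ Ico a (g p.1)})
    ((measurableSet_le measurable_const measurable_snd).inter
      (measurableSet_lt measurable_snd (hgc.measurable.comp measurable_fst)))
    (vadd_setOf_mem_Ico_eq (periodic_curve_of_lift (fun x y hy => (hlift x y hy).1) hg))
    (hbij.injOn.mono hUS) (fun n p hp => map_vadd_of_lift hlift n (hUS hp).2)
    (fun t ht => volume_image_of_det_eq_one hab hC1 hbij.injOn harea (ht.trans hUS))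
  rw [image_setOf_mem_Ico_eq hFc hbij (fun x => (hbdry x).1) (fun x => (hbdry x).2)
    (fun x => (hg x).1) hGc hgraph] at hvol
  obtain ⟨x, hx⟩ := exists_eq_of_volume_inter_unitStrip_eq hgc hGc (fun x => (hgS x).1)
    (fun x => (hbij.mapsTo (show (x, g x) ∈ univ ×ˢ Icc a b from ⟨trivial, hgS x⟩)).2.1) hvol
  exact ⟨x, g x, hgS x, ((hg x).2 _ (hgS x)).2 rfl, hx⟩
end

section
/- Let V₀, R : ℝⁿ → ℝⁿ be smooth vector fields. Suppose φ⁰, φ : ℝ × ℝⁿ → ℝⁿ are smooth maps satisfying ∂_tφ⁰(t,x) = V₀(φ⁰(t,x)) with φ⁰(0,x) = x, and ∂_tφ(t,x) = V₀(φ(t,x)) + R(φ(t,x)) with φ(0,x) = x (φ⁰ and φ are the flows of V₀ and of V₀ + R). Let w : ℝ × ℝⁿ → ℝⁿ be differentiable in t with w(0,x) = x and φ(t,x) = φ⁰(t, w(t,x)) for all (t,x), and assume that for each (t,x) the spatial differential D_xφ⁰(t, ·) evaluated at w(t,x) is an invertible linear map of ℝⁿ. Then for all (t,x): ∂_t w(t,x)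 = (D_xφ⁰(t, w(t,x)))⁻¹ (R(φ⁰(t, w(t,x)))). -/
/-- **Perturbation of flows.**
Let `φ⁰` be the flow of a smooth vector field `V₀` and `φ` the flow of the perturbed
field `V₀ + R`. If `w(t,x)`, with `w(0,x) = x`, satisfies `φ(t,x) = φ⁰(t, w(t,x))` and
the spatial differential `D_x φ⁰(t, ·)` at `w(t,x)` is invertible, then
`∂_t w(t,x) = (D_x φ⁰(t, w(t,x)))⁻¹ (R(φ⁰(t, w(t,x))))`. -/
theorem perturbation_of_flows (n : ℕ)
    (V₀ R : (Fin n → ℝ) → Fin n → ℝ)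
    (hV₀ : ContDiff ℝ (⊤ : ℕ∞) V₀) (hR : ContDiff ℝ (⊤ : ℕ∞) R)
    (φ₀ φ : ℝ → (Fin n → ℝ) → Fin n → ℝ)
    (hφ₀smooth : ContDiff ℝ (⊤ : ℕ∞) (fun p : ℝ × (Fin n → ℝ) => φ₀ p.1 p.2))
    (hφsmooth : ContDiff ℝ (⊤ : ℕ∞) (fun p : ℝ × (Fin n → ℝ) => φ p.1 p.2))
    (hφ₀init : ∀ x, φ₀ 0 x = x)
    (hφ₀flow : ∀ t x, HasDerivAt (fun s => φ₀ s x) (V₀ (φ₀ t x)) t)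
    (hφinit : ∀ x, φ 0 x = x)
    (hφflow : ∀ t x, HasDerivAt (fun s => φ s x) (V₀ (φ t x) + R (φ t x)) t)
    (w : ℝ → (Fin n → ℝ) → Fin n → ℝ)
    (hwinit : ∀ x, w 0 x = x)
    (hwdiff : ∀ t x, DifferentiableAt ℝ (fun s => w s x) t)
    (hconj : ∀ t x, φ t x = φ₀ t (w t x))
    (hinv : ∀ t x, ∃ L : (Fin n → ℝ) ≃L[ℝ] (Fin n → ℝ),
      (L : (Fin n → ℝ) →L[ℝ] (Fin n → ℝ)) = fderiv ℝ (φ₀ t) (w t x)) :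
    ∀ t x, deriv (fun s => w s x) t =
      (fderiv ℝ (φ₀ t) (w t x)).inverse (R (φ₀ t (w t x))) := by
  intro t x
  obtain ⟨L, hL⟩ := hinv t x
  set y := w t x with hy
  set w' := deriv (fun s => w s x) t with hw'
  have hF : HasFDerivAt (fun p : ℝ × (Fin n → ℝ) => φ₀ p.1 p.2)
      (fderiv ℝ (fun p : ℝ × (Fin n → ℝ) => φ₀ p.1 p.2) (t, y)) (t, y) :=
    (hφ₀smooth.differentiable (by simp) (t, y)).hasFDerivAt
  set F := fderiv ℝ (fun p : ℝ × (Fin n → ℝ) => φ₀ p.1 p.2) (t, y) with hFdef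
  have hwD : HasDerivAt (fun s => w s x) w' t := (hwdiff t x).hasDerivAt
  have hcurve : HasDerivAt (fun s => (s, w s x)) ((1 : ℝ), w') t :=
    (hasDerivAt_id t).prodMk hwD
  have hcomp : HasDerivAt (fun s => φ₀ s (w s x)) (F (1, w')) t :=
    by have := hF.comp_hasDerivAt t hcurve; exact this
  -- F (1, 0) = V₀ (φ₀ t y)
  have h1 : F (1, 0) = V₀ (φ₀ t y) := by
    have hc : HasDerivAt (fun s : ℝ => (s, y)) ((1 : ℝ), (0 : Fin n → ℝ)) t :=
      (hasDerivAt_id t).prodMk (hasDerivAt_const t y)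
    have := hF.comp_hasDerivAt t hc
    exact this.unique (hφ₀flow t y)
  -- fderiv ℝ (φ₀ t) y v = F (0, v)
  have h2 : ∀ v, fderiv ℝ (φ₀ t) y v = F (0, v) := by
    intro v
    have hmk : HasFDerivAt (fun z : Fin n → ℝ => (t, z))
        (ContinuousLinearMap.inr ℝ ℝ (Fin n → ℝ)) y := hasFDerivAt_prodMk_right t y
    have hcomp2 : HasFDerivAt (φ₀ t)
        (F.comp (ContinuousLinearMap.inr ℝ ℝ (Fin n → ℝ))) y := hF.comp y hmk
    rw [hcomp2.fderiv]
    rfl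
  -- main identity
  have hφeq : (fun s => φ s x) = fun s => φ₀ s (w s x) := funext fun s => hconj s x
  have hderiv : F (1, w') = V₀ (φ t x) + R (φ t x) := by
    have := hφflow t x
    rw [hφeq] at this
    exact hcomp.unique this
  have hsplit : F (1, w') = F (1, 0) + F (0, w') := by
    rw [← map_add]
    norm_num
  have hkey : fderiv ℝ (φ₀ t) y w' = R (φ₀ t y) := by
    have hφt : φ t x = φ₀ t y := hconj t x
    have : F (1, 0) + F (0, w') = V₀ (φ₀ t y) + R (φ₀ t y) := by
      rw [← hsplit, hderiv, hφt]
    rw [h1] at this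
    have h3 : F (0, w') = R (φ₀ t y) := by
      exact add_left_cancel this
    rw [h2, h3]
  rw [← hL] at hkey ⊢
  rw [ContinuousLinearMap.inverse_equiv]
  rw [← hkey]
  simp
end

section
/- For every real number C with C ∈ (−1, 1) ∪ (1, ∞), the level set L_C = {(ξ,η,ζ) ∈ ℝ³ : ξ² + η² = 1 and ½ζ² + 2ξη = C} is nonempty, compact, and has exactly two connected components. -/
/-!
On `L_C` the sign of a suitable coordinate never changes: for `C > 1` the coordinate `ζ` cannot
vanish (as `2ξη ≤ ξ² + η² = 1`), and for `-1 < C < 1` neither can `ξ - η` (as `ξ = η` forces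
`C = 1 + ζ²/2`). Each of the two resulting clopen halves is the continuous image of the unit
circle: for `C > 1` it is the graph `ζ = ±√(2C - 4ξη)` over the circle `ξ² + η² = 1`, and for
`|C| < 1` it is a graph `ξ - η = ±√(2 - (ξ + η)²)` over the ellipse `(ξ + η)² + ζ²/2 = C + 1`.
Two disjoint connected clopen sets covering `L_C` are its two components.
-/

open Set Function Real

section

variable {X : Type*} [TopologicalSpace X]

theorem Continuous.connectedComponentsLift_bijective {Y : Type*} [TopologicalSpace Y]
    [TotallyDisconnectedSpace Y] {f : X → Y} (hf : Continuous f)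
    (hsurj : Surjective f) (hfib : ∀ y, IsPreconnected (f ⁻¹' {y})) :
    Bijective hf.connectedComponentsLift := by
  refine ⟨fun x y hxy ↦ ?_, fun y ↦ ?_⟩
  · obtain ⟨x, rfl⟩ := ConnectedComponents.surjective_coe x
    obtain ⟨y, rfl⟩ := ConnectedComponents.surjective_coe y
    simp only [hf.connectedComponentsLift_apply_coe] at hxy
    exact ConnectedComponents.coe_eq_coe.2 <| connectedComponent_eq <|
      (hfib (f y)).subset_connectedComponent hxy rfl
  · obtain ⟨x, rfl⟩ := hsurj y
    exact ⟨x, hf.connectedComponentsLift_apply_coe x⟩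

theorem natCard_connectedComponents_eq_two {A : Set X}
    (hA : IsClopen A) (hA₁ : IsConnected A) (hA₂ : IsConnected Aᶜ) :
    Nat.card (ConnectedComponents X) = 2 := by
  have hf : Continuous A.boolIndicator := (continuous_boolIndicator_iff_isClopen A).2 hA
  have hbij : Bijective hf.connectedComponentsLift := by
    refine hf.connectedComponentsLift_bijective (fun b ↦ ?_) fun b ↦ ?_ <;> cases b
    · exact hA₂.nonempty.imp fun x hx ↦ (A.notMem_iff_boolIndicator x).1 hx
    · exact hA₁.nonempty.imp fun x hx ↦ (A.mem_iff_boolIndicator x).1 hx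
    · simpa only [preimage_boolIndicator_false] using hA₂.isPreconnected
    · simpa only [preimage_boolIndicator_true] using hA₁.isPreconnected
  simp [Nat.card_eq_of_bijective _ hbij]

theorem isConnected_preimage_subtypeVal {S t : Set X}
    (h : IsConnected (S ∩ t)) : IsConnected ((↑) ⁻¹' t : Set S) :=
  ⟨Subtype.preimage_coe_nonempty.2 h.nonempty, by
    rw [← Topology.IsInducing.subtypeVal.isPreconnected_image, Subtype.image_preimage_coe]
    exact h.isPreconnected⟩

theorem natCard_connectedComponents_eq_two_of_sign {S : Set X} {g : X → ℝ} (hg : Continuous g) (hS : ∀ p ∈ S, g p ≠ 0)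
    (hpos : IsConnected (S ∩ {p | 0 < g p})) (hneg : IsConnected (S ∩ {p | g p < 0})) :
    Nat.card (ConnectedComponents S) = 2 := by
  have hcompl : ((↑) ⁻¹' {p | 0 < g p} : Set S)ᶜ = (↑) ⁻¹' {p | g p < 0} := by
    ext ⟨p, hp⟩
    simpa [not_lt] using (hS p hp).le_iff_lt
  refine natCard_connectedComponents_eq_two (A := (↑) ⁻¹' {p | 0 < g p})
    ⟨?_, (isOpen_lt continuous_const hg).preimage continuous_subtype_val⟩
    (isConnected_preimage_subtypeVal hpos) ?_
  · rw [← isOpen_compl_iff, hcompl]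
    exact (isOpen_lt hg continuous_const).preimage continuous_subtype_val
  · rw [hcompl]
    exact isConnected_preimage_subtypeVal hneg

end

def unitCircle : Set (ℝ × ℝ) := {q | q.1 ^ 2 + q.2 ^ 2 = 1}

theorem range_cos_sin : range (fun θ ↦ (cos θ, sin θ)) = unitCircle := by
  refine Subset.antisymm (range_subset_iff.2 fun θ ↦ cos_sq_add_sin_sq θ) ?_
  rintro ⟨a, b⟩ hab
  have hnorm : ‖(⟨a, b⟩ : ℂ)‖ = 1 := by
    have hab : a ^ 2 + b ^ 2 = 1 := hab
    simp [Complex.norm_eq_sqrt_sq_add_sq, hab]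
  refine ⟨Complex.arg ⟨a, b⟩, ?_⟩
  simpa [hnorm] using And.intro (Complex.norm_mul_cos_arg ⟨a, b⟩) (Complex.norm_mul_sin_arg ⟨a, b⟩)

theorem isConnected_unitCircle : IsConnected unitCircle :=
  range_cos_sin ▸ isConnected_range (by fun_prop)

theorem mul_mul_cancel_of_sq_eq_one {s : ℝ} (hs : s ^ 2 = 1) (x : ℝ) : s * (s * x) = x := by
  rw [← mul_assoc, ← sq, hs, one_mul]

theorem sq_mul_sqrt_of_sq_eq_one {s w : ℝ} (hs : s ^ 2 = 1) (hw : 0 ≤ w) : (s * √w) ^ 2 = w := by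
  rw [mul_pow, hs, one_mul, sq_sqrt hw]

theorem mul_sqrt_sq_of_sq_eq_one {s v : ℝ} (hs : s ^ 2 = 1) (hv : 0 < s * v) :
    s * √(v ^ 2) = v := by
  rw [show v ^ 2 = (s * v) ^ 2 by rw [mul_pow, hs, one_mul], sqrt_sq hv.le,
    mul_mul_cancel_of_sq_eq_one hs]

def casimirLevel (C : ℝ) : Set (ℝ × ℝ × ℝ) :=
  {p | p.1 ^ 2 + p.2.1 ^ 2 = 1 ∧ (1 / 2) * p.2.2 ^ 2 + 2 * p.1 * p.2.1 = C}

theorem isCompact_casimirLevel (C : ℝ) : IsCompact (casimirLevel C) := by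
  have hclosed : IsClosed (casimirLevel C) :=
    (isClosed_eq (by fun_prop) continuous_const).inter (isClosed_eq (by fun_prop) continuous_const)
  have hbox : IsCompact (Icc (-1 : ℝ) 1 ×ˢ Icc (-1 : ℝ) 1 ×ˢ Icc (-(C + 2)) (C + 2)) :=
    isCompact_Icc.prod (isCompact_Icc.prod isCompact_Icc)
  refine hbox.of_isClosed_subset hclosed ?_
  rintro ⟨x, y, z⟩ ⟨h₁, h₂⟩
  have hz : z ^ 2 ≤ 2 * C + 2 := by nlinarith [sq_nonneg (x + y)]
  refine ⟨⟨?_, ?_⟩, ⟨?_, ?_⟩, ⟨?_, ?_⟩⟩ <;>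
    nlinarith [sq_nonneg x, sq_nonneg y, sq_nonneg (z + C + 2), sq_nonneg (z - C - 2)]

theorem casimirLevel_inter_eq_image_of_one_lt {C s : ℝ} (hC : 1 < C) (hs : s ^ 2 = 1) :
    casimirLevel C ∩ {p | 0 < s * p.2.2} =
      (fun q : ℝ × ℝ ↦ (q.1, q.2, s * √(2 * C - 4 * q.1 * q.2))) '' unitCircle := by
  refine Subset.antisymm ?_ ?_
  · rintro ⟨x, y, z⟩ ⟨⟨h₁, h₂⟩, hz⟩
    have hw : 2 * C - 4 * x * y = z ^ 2 := by linear_combination -2 * h₂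
    exact ⟨(x, y), h₁, by simp only [hw, mul_sqrt_sq_of_sq_eq_one hs hz]⟩
  · rintro _ ⟨⟨a, b⟩, hab : a ^ 2 + b ^ 2 = 1, rfl⟩
    have hw : 0 < 2 * C - 4 * a * b := by nlinarith [sq_nonneg (a - b)]
    refine ⟨⟨hab, ?_⟩, ?_⟩
    · linear_combination (1 / 2 : ℝ) * sq_mul_sqrt_of_sq_eq_one hs hw.le
    · show 0 < s * (s * _)
      rw [mul_mul_cancel_of_sq_eq_one hs]
      exact sqrt_pos.2 hw

theorem casimirLevel_inter_eq_image_of_lt_one {C s : ℝ} (hC₁ : -1 < C) (hC₂ : C < 1)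
    (hs : s ^ 2 = 1) :
    casimirLevel C ∩ {p | 0 < s * (p.1 - p.2.1)} =
      (fun q : ℝ × ℝ ↦ ((√(C + 1) * q.1 + s * √(2 - (C + 1) * q.1 ^ 2)) / 2,
        (√(C + 1) * q.1 - s * √(2 - (C + 1) * q.1 ^ 2)) / 2, √(2 * C + 2) * q.2)) ''
        unitCircle := by
  have hr : √(C + 1) ^ 2 = C + 1 := sq_sqrt (by linarith)
  have hρ : √(2 * C + 2) ^ 2 = 2 * C + 2 := sq_sqrt (by linarith)
  have hr₀ : √(C + 1) ≠ 0 := (sqrt_pos.2 (by linarith)).ne'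
  have hρ₀ : √(2 * C + 2) ≠ 0 := (sqrt_pos.2 (by linarith)).ne'
  refine Subset.antisymm ?_ ?_
  · rintro ⟨x, y, z⟩ ⟨⟨h₁ : x ^ 2 + y ^ 2 = 1, h₂ : 1 / 2 * z ^ 2 + 2 * x * y = C⟩,
      hxy : 0 < s * (x - y)⟩
    refine ⟨((x + y) / √(C + 1), z / √(2 * C + 2)), ?_, ?_⟩
    · show ((x + y) / √(C + 1)) ^ 2 + (z / √(2 * C + 2)) ^ 2 = 1
      have : C + 1 ≠ 0 := by linarith
      have : 2 * C + 2 ≠ 0 := by linarith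
      rw [div_pow, div_pow, hr, hρ]
      field_simp
      linear_combination 2 * h₁ + 2 * h₂
    · have hw : 2 - (C + 1) * ((x + y) / √(C + 1)) ^ 2 = (x - y) ^ 2 := by
        rw [div_pow, hr, mul_div_cancel₀ _ (by linarith)]
        linear_combination -2 * h₁
      simp only [mul_div_cancel₀ _ hr₀, mul_div_cancel₀ _ hρ₀, hw,
        mul_sqrt_sq_of_sq_eq_one hs hxy]
      refine Prod.ext ?_ (Prod.ext ?_ rfl) <;> ring
  · rintro _ ⟨⟨a, b⟩, hab : a ^ 2 + b ^ 2 = 1, rfl⟩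
    have hw : 0 < 2 - (C + 1) * a ^ 2 := by nlinarith [sq_nonneg b]
    have hv := sq_mul_sqrt_of_sq_eq_one hs hw.le
    have hu : (√(C + 1) * a) ^ 2 = (C + 1) * a ^ 2 := by rw [mul_pow, hr]
    have hz : (√(2 * C + 2) * b) ^ 2 = (2 * C + 2) * b ^ 2 := by rw [mul_pow, hρ]
    refine ⟨⟨?_, ?_⟩, ?_⟩
    · linear_combination (1 / 2 : ℝ) * hu + (1 / 2 : ℝ) * hv
    · linear_combination (1 / 2 : ℝ) * hz + (1 / 2 : ℝ) * hu - (1 / 2 : ℝ) * hv + (C + 1) * hab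
    · show 0 < s * ((_ + s * _) / 2 - (_ - s * _) / 2)
      rw [show ∀ u v : ℝ, (u + v) / 2 - (u - v) / 2 = v from fun u v ↦ by ring,
        mul_mul_cancel_of_sq_eq_one hs]
      exact sqrt_pos.2 hw

theorem exists_sign_split_casimirLevel {C : ℝ} (hC : C ∈ Ioo (-1 : ℝ) 1 ∪ Ioi (1 : ℝ)) :
    ∃ g : ℝ × ℝ × ℝ → ℝ, Continuous g ∧ (∀ p ∈ casimirLevel C, g p ≠ 0) ∧
      IsConnected (casimirLevel C ∩ {p | 0 < g p}) ∧
      IsConnected (casimirLevel C ∩ {p | g p < 0}) := by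
  rcases hC with ⟨hC₁, hC₂⟩ | hC
  · have hconn (s : ℝ) (hs : s ^ 2 = 1) :
        IsConnected (casimirLevel C ∩ {p | 0 < s * (p.1 - p.2.1)}) := by
      rw [casimirLevel_inter_eq_image_of_lt_one hC₁ hC₂ hs]
      exact isConnected_unitCircle.image _ (by fun_prop)
    refine ⟨fun p ↦ p.1 - p.2.1, by fun_prop, ?_, by simpa using hconn 1 (by norm_num),
      by simpa using hconn (-1) (by norm_num)⟩
    rintro ⟨x, y, z⟩ ⟨h₁, h₂⟩ hxy
    simp only at h₁ h₂ hxy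
    nlinarith [sq_nonneg z]
  · have hconn (s : ℝ) (hs : s ^ 2 = 1) :
        IsConnected (casimirLevel C ∩ {p | 0 < s * p.2.2}) := by
      rw [casimirLevel_inter_eq_image_of_one_lt hC hs]
      exact isConnected_unitCircle.image _ (by fun_prop)
    refine ⟨fun p ↦ p.2.2, by fun_prop, ?_, by simpa using hconn 1 (by norm_num),
      by simpa using hconn (-1) (by norm_num)⟩
    rintro ⟨x, y, z⟩ ⟨h₁, h₂⟩ hz
    simp only at h₁ h₂ hz
    nlinarith [sq_nonneg (x - y), mem_Ioi.1 hC]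

/-- **The regular level sets of the Casimir on the unit cylinder have two components.**
For every non-critical value `C ∈ (-1,1) ∪ (1,∞)`, the set
`L_C = {(ξ,η,ζ) : ξ² + η² = 1, ½ζ² + 2ξη = C}` is nonempty, compact, and has exactly
two connected components. -/
theorem casimir_level_two_components (C : ℝ)
    (hC : C ∈ Set.Ioo (-1 : ℝ) 1 ∪ Set.Ioi (1 : ℝ)) :
    (({p : ℝ × ℝ × ℝ | p.1 ^ 2 + p.2.1 ^ 2 = 1 ∧
        (1 / 2) * p.2.2 ^ 2 + 2 * p.1 * p.2.1 = C} : Set (ℝ × ℝ × ℝ)).Nonempty) ∧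
    IsCompact ({p : ℝ × ℝ × ℝ | p.1 ^ 2 + p.2.1 ^ 2 = 1 ∧
        (1 / 2) * p.2.2 ^ 2 + 2 * p.1 * p.2.1 = C} : Set (ℝ × ℝ × ℝ)) ∧
    Nat.card (ConnectedComponents
      ({p : ℝ × ℝ × ℝ | p.1 ^ 2 + p.2.1 ^ 2 = 1 ∧
        (1 / 2) * p.2.2 ^ 2 + 2 * p.1 * p.2.1 = C} : Set (ℝ × ℝ × ℝ))) = 2 := by
  obtain ⟨g, hg, hg₀, hpos, hneg⟩ := exists_sign_split_casimirLevel hC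
  exact ⟨hpos.nonempty.mono inter_subset_left, isCompact_casimirLevel C,
    natCard_connectedComponents_eq_two_of_sign hg hg₀ hpos hneg⟩
end

section
/- Let T₀ > 0, ε₀ > 0, M > 0 and let Θ, T : (0, ε₀) → ℝ be continuous functions satisfying |Θ(I) − 2T₀/I²| ≤ M/I and |T(I) − 2T₀/I| ≤ M for all I ∈ (0, ε₀). Then there exist a natural number k₀ and a constant M′ > 0 such that for every integer k ≥ k₀: (a) there exists I ∈ (0, ε₀) with Θ(I) = 2πk; and (b) every I ∈ (0, ε₀) with Θ(I) = 2πk satisfies |T(I) − 2√(πkT₀)| ≤ M′. -/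
/-!
Since `Θ(I) ≥ 2T₀/I² - M/I`, the angle `Θ` blows up as `I → 0⁺`, so by the intermediate value
theorem it takes every value `2πk ≥ Θ(ε₀/2)` on `(0, ε₀/2]`. At such a solution, multiplying
`|2πk - 2T₀/I²| ≤ M/I` by `2T₀` gives `|y² - x²| ≤ M x` for `x = 2T₀/I` and `y = 2√(πkT₀)`;
dividing by `x + y ≥ x` yields `|x - y| ≤ M`, and `|T(I) - x| ≤ M` finishes the bound.
-/

open Real Set Filter Topology

theorem abs_sub_le_of_abs_sq_sub_sq_le {x y c : ℝ} (hx : 0 < x) (hy : 0 ≤ y)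
    (h : |y ^ 2 - x ^ 2| ≤ c * x) : |x - y| ≤ c := by
  have hfactor : |y ^ 2 - x ^ 2| = |x - y| * (x + y) := by
    rw [show y ^ 2 - x ^ 2 = -((x - y) * (x + y)) by ring, abs_neg, abs_mul,
      abs_of_pos (by positivity : 0 < x + y)]
  have hc : 0 ≤ c := nonneg_of_mul_nonneg_left ((abs_nonneg _).trans h) hx
  refine le_of_mul_le_mul_right ?_ (by positivity : 0 < x + y)
  calc |x - y| * (x + y) ≤ c * x := hfactor ▸ h
    _ ≤ c * (x + y) := by gcongr; linarith

theorem exists_Ioc_eq_of_tendsto_nhdsGT_atTop {α δ : Type*} [ConditionallyCompleteLinearOrder α]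
    [TopologicalSpace α] [OrderTopology α] [DenselyOrdered α] [LinearOrder δ] [TopologicalSpace δ]
    [OrderClosedTopology δ] {f : α → δ} {a b : α} {y : δ} (hab : a < b)
    (hf : ContinuousOn f (Ioc a b)) (hlim : Tendsto f (𝓝[>] a) atTop) (hy : f b ≤ y) :
    ∃ x ∈ Ioc a b, f x = y := by
  have : (𝓝[>] a).NeBot := nhdsGT_neBot_of_exists_gt ⟨b, hab⟩
  obtain ⟨c, hyc, hc⟩ := ((hlim.eventually_ge_atTop y).and (Ioc_mem_nhdsGT hab)).exists
  have hsub : Icc c b ⊆ Ioc a b := Icc_subset_Ioc hc.1 le_rfl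
  obtain ⟨x, hx, hfx⟩ := intermediate_value_Icc' hc.2 (hf.mono hsub) ⟨hy, hyc⟩
  exact ⟨x, hsub hx, hfx⟩

theorem tendsto_div_sq_sub_div_nhdsGT_zero {A : ℝ} (hA : 0 < A) (B : ℝ) :
    Tendsto (fun x : ℝ => A / x ^ 2 - B / x) (𝓝[>] 0) atTop := by
  have hinv := tendsto_inv_nhdsGT_zero (𝕜 := ℝ)
  have hprod := hinv.atTop_mul_atTop₀
    (tendsto_atTop_add_const_right _ (-B) (hinv.const_mul_atTop hA))
  refine hprod.congr fun x => ?_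
  ring

theorem abs_two_mul_div_sub_two_mul_sqrt_le {κ T₀ M I : ℝ} (hκ : 0 ≤ κ) (hT₀ : 0 < T₀)
    (hI : 0 < I) (h : |2 * κ - 2 * T₀ / I ^ 2| ≤ M / I) :
    |2 * T₀ / I - 2 * √(κ * T₀)| ≤ M := by
  refine abs_sub_le_of_abs_sq_sub_sq_le (by positivity) (by positivity) ?_
  calc |(2 * √(κ * T₀)) ^ 2 - (2 * T₀ / I) ^ 2| = 2 * T₀ * |2 * κ - 2 * T₀ / I ^ 2| := by
        rw [mul_pow, sq_sqrt (by positivity),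
          show 2 ^ 2 * (κ * T₀) - (2 * T₀ / I) ^ 2 = 2 * T₀ * (2 * κ - 2 * T₀ / I ^ 2) by ring,
          abs_mul, abs_of_pos (by positivity : 0 < 2 * T₀)]
    _ ≤ 2 * T₀ * (M / I) := by gcongr
    _ = M * (2 * T₀ / I) := by ring

theorem closing_lengths_asymptotics_general (T₀ ε₀ M : ℝ) (hT₀ : 0 < T₀) (hε₀ : 0 < ε₀)
    (hM : 0 < M) (Θ T : ℝ → ℝ)
    (hΘc : ContinuousOn Θ (Set.Ioo 0 ε₀))
    (hΘ : ∀ I ∈ Set.Ioo (0 : ℝ) ε₀, |Θ I - 2 * T₀ / I ^ 2| ≤ M / I)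
    (hT : ∀ I ∈ Set.Ioo (0 : ℝ) ε₀, |T I - 2 * T₀ / I| ≤ M) :
    ∃ (k₀ : ℕ) (M' : ℝ), 0 < M' ∧ ∀ k : ℕ, k₀ ≤ k →
      (∃ I ∈ Set.Ioo (0 : ℝ) ε₀, Θ I = 2 * π * k) ∧
      (∀ I ∈ Set.Ioo (0 : ℝ) ε₀, Θ I = 2 * π * k →
        |T I - 2 * Real.sqrt (π * k * T₀)| ≤ M') := by
  have hlim : Tendsto Θ (𝓝[>] 0) atTop := by
    refine tendsto_atTop_mono' _ ?_ (tendsto_div_sq_sub_div_nhdsGT_zero (A := 2 * T₀) (by positivity) M)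
    filter_upwards [Ioo_mem_nhdsGT hε₀] with I hI
    linarith [(abs_le.mp (hΘ I hI)).1]
  have hb : ε₀ / 2 < ε₀ := half_lt_self hε₀
  refine ⟨⌈Θ (ε₀ / 2) / (2 * π)⌉₊, 2 * M, by positivity, fun k hk => ⟨?_, fun I hI hΘI => ?_⟩⟩
  · have hΘb : Θ (ε₀ / 2) ≤ 2 * π * k :=
      (div_le_iff₀' (by positivity)).mp (Nat.ceil_le.mp hk)
    obtain ⟨I, hI, hΘI⟩ := exists_Ioc_eq_of_tendsto_nhdsGT_atTop (half_pos hε₀)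
      (hΘc.mono (Ioc_subset_Ioo_right hb)) hlim hΘb
    exact ⟨I, Ioc_subset_Ioo_right hb hI, hΘI⟩
  · have hangle := hΘ I hI
    rw [hΘI, mul_assoc] at hangle
    calc |T I - 2 * √(π * k * T₀)|
        ≤ |T I - 2 * T₀ / I| + |2 * T₀ / I - 2 * √(π * k * T₀)| := abs_sub_le _ _ _
      _ ≤ M + M := add_le_add (hT I hI)
          (abs_two_mul_div_sub_two_mul_sqrt_le (by positivity) hT₀ hI.1 hangle)
      _ = 2 * M := by ring

/-- **Asymptotics of the lengths of the spiraling closed geodesics.**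
If `Θ(I) = 2T₀/I² + O(1/I)` and `T(I) = 2T₀/I + O(1)` on `(0, ε₀)`, then for every
large enough integer `k` the equation `Θ(I) = 2πk` has a solution `I ∈ (0, ε₀)`, and
every such solution satisfies `T(I) = 2√(πkT₀) + O(1)`. -/
theorem closing_lengths_asymptotics (T₀ ε₀ M : ℝ) (hT₀ : 0 < T₀) (hε₀ : 0 < ε₀)
    (hM : 0 < M) (Θ T : ℝ → ℝ)
    (hΘc : ContinuousOn Θ (Set.Ioo 0 ε₀)) (hTc : ContinuousOn T (Set.Ioo 0 ε₀))
    (hΘ : ∀ I ∈ Set.Ioo (0 : ℝ) ε₀, |Θ I - 2 * T₀ / I ^ 2| ≤ M / I)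
    (hT : ∀ I ∈ Set.Ioo (0 : ℝ) ε₀, |T I - 2 * T₀ / I| ≤ M) :
    ∃ (k₀ : ℕ) (M' : ℝ), 0 < M' ∧ ∀ k : ℕ, k₀ ≤ k →
      (∃ I ∈ Set.Ioo (0 : ℝ) ε₀, Θ I = 2 * π * k) ∧
      (∀ I ∈ Set.Ioo (0 : ℝ) ε₀, Θ I = 2 * π * k →
        |T I - 2 * Real.sqrt (π * k * T₀)| ≤ M') :=
  closing_lengths_asymptotics_general T₀ ε₀ M hT₀ hε₀ hM Θ T hΘc hΘ hT
end
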